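/- Let P, Q ∈ PP(n), realized on {1,…,n}, such that P ⪯ Q, say E(Q) = E(P) ∖ {(i,j)} with (i,j) ∈ E(P). Then i and j are two consecutive letters, in this order, in the word representing σ = Ψ_n⁻¹(P) (i.e., there is k with σ(k) = i, σ(k+1) = j), and Ψ_n⁻¹(Q) = (i j) ∘ σ, the permutation obtained from σ by permuting these two consecutive letters. -/
import Mathlib


open scoped TensorProduct
open scoped Classical

noncomputable section

/-- A plane poset structure on a set `α`: two partial orders `≤_h` (`hle`) and `≤_r` (`rle`)
such that two distinct elements are comparable for `≤_h` if and only if they are not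
comparable for `≤_r`. -/
structure PlanePoset (α : Type) where
  hle : α → α → Prop
  rle : α → α → Prop
  hle_refl : ∀ x, hle x x
  hle_antisymm : ∀ x y, hle x y → hle y x → x = y
  hle_trans : ∀ x y z, hle x y → hle y z → hle x z
  rle_refl : ∀ x, rle x x
  rle_antisymm : ∀ x y, rle x y → rle y x → x = y
  rle_trans : ∀ x y z, rle x y → rle y z → rle x z
  compat : ∀ x y, x ≠ y → ((hle x y ∨ hle y x) ↔ ¬ (rle x y ∨ rle y x))

namespace PlanePoset

variable {α β : Type}

/-- The induced (total) order `x ≤ y iff x ≤_h y or x ≤_r y`. -/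
def tle (P : PlanePoset α) (x y : α) : Prop := P.hle x y ∨ P.rle x y

/-- Transport of a plane poset structure along a bijection. -/
def map (e : α ≃ β) (P : PlanePoset α) : PlanePoset β where
  hle x y := P.hle (e.symm x) (e.symm y)
  rle x y := P.rle (e.symm x) (e.symm y)
  hle_refl x := P.hle_refl _
  hle_antisymm x y h1 h2 := e.symm.injective (P.hle_antisymm _ _ h1 h2)
  hle_trans x y z h1 h2 := P.hle_trans _ _ _ h1 h2
  rle_refl x := P.rle_refl _
  rle_antisymm x y h1 h2 := e.symm.injective (P.rle_antisymm _ _ h1 h2)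
  rle_trans x y z h1 h2 := P.rle_trans _ _ _ h1 h2
  compat x y hxy := P.compat _ _ fun h => hxy (e.symm.injective h)

@[simp] theorem map_hle (e : α ≃ β) (P : PlanePoset α) (x y : β) :
    (P.map e).hle x y ↔ P.hle (e.symm x) (e.symm y) := Iff.rfl

@[simp] theorem map_rle (e : α ≃ β) (P : PlanePoset α) (x y : β) :
    (P.map e).rle x y ↔ P.rle (e.symm x) (e.symm y) := Iff.rfl

/-- The composition `PQ` of two plane posets: `x ≤_r y` for every `x ∈ P`, `y ∈ Q`. -/
def comp (P : PlanePoset α) (Q : PlanePoset β) : PlanePoset (α ⊕ β) where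
  hle x y :=
    match x, y with
    | Sum.inl a, Sum.inl b => P.hle a b
    | Sum.inr a, Sum.inr b => Q.hle a b
    | _, _ => False
  rle x y :=
    match x, y with
    | Sum.inl a, Sum.inl b => P.rle a b
    | Sum.inr a, Sum.inr b => Q.rle a b
    | Sum.inl _, Sum.inr _ => True
    | Sum.inr _, Sum.inl _ => False
  hle_refl := by
    rintro (a | a)
    · exact P.hle_refl a
    · exact Q.hle_refl a
  hle_antisymm := by
    rintro (a | a) (b | b) h1 h2
    · exact congrArg Sum.inl (P.hle_antisymm a b h1 h2)
    · exact h1.elim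
    · exact h1.elim
    · exact congrArg Sum.inr (Q.hle_antisymm a b h1 h2)
  hle_trans := by
    rintro (a | a) (b | b) (c | c) h1 h2 <;>
      first
        | exact P.hle_trans _ _ _ h1 h2
        | exact Q.hle_trans _ _ _ h1 h2
        | exact h1.elim
        | exact h2.elim
  rle_refl := by
    rintro (a | a)
    · exact P.rle_refl a
    · exact Q.rle_refl a
  rle_antisymm := by
    rintro (a | a) (b | b) h1 h2
    · exact congrArg Sum.inl (P.rle_antisymm a b h1 h2)
    · exact h2.elim
    · exact h1.elim
    · exact congrArg Sum.inr (Q.rle_antisymm a b h1 h2)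
  rle_trans := by
    rintro (a | a) (b | b) (c | c) h1 h2 <;>
      first
        | exact P.rle_trans _ _ _ h1 h2
        | exact Q.rle_trans _ _ _ h1 h2
        | exact h1.elim
        | exact h2.elim
        | trivial
  compat := by
    rintro (a | a) (b | b) hne
    · exact P.compat a b fun h => hne (congrArg Sum.inl h)
    · show (False ∨ False) ↔ ¬ (True ∨ False)
      simp
    · show (False ∨ False) ↔ ¬ (False ∨ True)
      simp
    · exact Q.compat a b fun h => hne (congrArg Sum.inr h)

/-- The product `P ▷ Q` of two plane posets: `x ≤_h y` for every `x ∈ P`, `y ∈ Q`. -/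
def hcomp (P : PlanePoset α) (Q : PlanePoset β) : PlanePoset (α ⊕ β) where
  hle x y :=
    match x, y with
    | Sum.inl a, Sum.inl b => P.hle a b
    | Sum.inr a, Sum.inr b => Q.hle a b
    | Sum.inl _, Sum.inr _ => True
    | Sum.inr _, Sum.inl _ => False
  rle x y :=
    match x, y with
    | Sum.inl a, Sum.inl b => P.rle a b
    | Sum.inr a, Sum.inr b => Q.rle a b
    | _, _ => False
  hle_refl := by
    rintro (a | a)
    · exact P.hle_refl a
    · exact Q.hle_refl a
  hle_antisymm := by
    rintro (a | a) (b | b) h1 h2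
    · exact congrArg Sum.inl (P.hle_antisymm a b h1 h2)
    · exact h2.elim
    · exact h1.elim
    · exact congrArg Sum.inr (Q.hle_antisymm a b h1 h2)
  hle_trans := by
    rintro (a | a) (b | b) (c | c) h1 h2 <;>
      first
        | exact P.hle_trans _ _ _ h1 h2
        | exact Q.hle_trans _ _ _ h1 h2
        | exact h1.elim
        | exact h2.elim
        | trivial
  rle_refl := by
    rintro (a | a)
    · exact P.rle_refl a
    · exact Q.rle_refl a
  rle_antisymm := by
    rintro (a | a) (b | b) h1 h2
    · exact congrArg Sum.inl (P.rle_antisymm a b h1 h2)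
    · exact h1.elim
    · exact h1.elim
    · exact congrArg Sum.inr (Q.rle_antisymm a b h1 h2)
  rle_trans := by
    rintro (a | a) (b | b) (c | c) h1 h2 <;>
      first
        | exact P.rle_trans _ _ _ h1 h2
        | exact Q.rle_trans _ _ _ h1 h2
        | exact h1.elim
        | exact h2.elim
  compat := by
    rintro (a | a) (b | b) hne
    · exact P.compat a b fun h => hne (congrArg Sum.inl h)
    · show (True ∨ False) ↔ ¬ (False ∨ False)
      simp
    · show (False ∨ True) ↔ ¬ (False ∨ False)
      simp
    · exact Q.compat a b fun h => hne (congrArg Sum.inr h)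

/-- Restriction of a plane poset to a subset (a plane subposet). -/
def res (P : PlanePoset α) (s : Finset α) : PlanePoset {x : α // x ∈ s} where
  hle x y := P.hle x.1 y.1
  rle x y := P.rle x.1 y.1
  hle_refl x := P.hle_refl _
  hle_antisymm x y h1 h2 := Subtype.ext (P.hle_antisymm _ _ h1 h2)
  hle_trans x y z h1 h2 := P.hle_trans _ _ _ h1 h2
  rle_refl x := P.rle_refl _
  rle_antisymm x y h1 h2 := Subtype.ext (P.rle_antisymm _ _ h1 h2)
  rle_trans x y z h1 h2 := P.rle_trans _ _ _ h1 h2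
  compat x y hxy := P.compat _ _ fun h => hxy (Subtype.ext h)

/-- The involution `ι` exchanging the two partial orders. -/
def swap (P : PlanePoset α) : PlanePoset α where
  hle := P.rle
  rle := P.hle
  hle_refl := P.rle_refl
  hle_antisymm := P.rle_antisymm
  hle_trans := P.rle_trans
  rle_refl := P.hle_refl
  rle_antisymm := P.hle_antisymm
  rle_trans := P.hle_trans
  compat x y hxy := by
    have h := P.compat x y hxy
    tauto

end PlanePoset

/-- A plane poset structure on `Fin n` is canonical when the induced total order
is the usual order on `{1, …, n}`. -/
def IsCanon {n : ℕ} (P : PlanePoset (Fin n)) : Prop :=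
  ∀ x y : Fin n, (P.hle x y ∨ P.rle x y) ↔ x ≤ y

/-- `PP(n)`: (isoclasses of) plane posets of cardinality `n`, realized as the canonical
plane poset structures on `{1, …, n}`. -/
def CanonPP (n : ℕ) : Type := { P : PlanePoset (Fin n) // IsCanon P }

namespace CanonPP

/-- The empty plane poset, unit of both products. -/
def one : CanonPP 0 :=
  ⟨{ hle := fun _ _ => True
     rle := fun _ _ => True
     hle_refl := fun _ => trivial
     hle_antisymm := fun x => x.elim0
     hle_trans := fun _ _ _ _ _ => trivial
     rle_refl := fun _ => trivial
     rle_antisymm := fun x => x.elim0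
     rle_trans := fun _ _ _ _ _ => trivial
     compat := fun x => x.elim0 }, fun x => x.elim0⟩

/-- The composition `PQ` of plane posets, realized canonically. -/
def comp {k l : ℕ} (P : CanonPP k) (Q : CanonPP l) : CanonPP (k + l) :=
  ⟨(P.1.comp Q.1).map finSumFinEquiv, by
    intro x y
    obtain ⟨a, rfl⟩ := finSumFinEquiv.surjective x
    obtain ⟨b, rfl⟩ := finSumFinEquiv.surjective y
    simp only [PlanePoset.map_hle, PlanePoset.map_rle, Equiv.symm_apply_apply]
    rcases a with a | a <;> rcases b with b | b
    · show (P.1.hle a b ∨ P.1.rle a b) ↔ _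
      rw [P.2 a b, finSumFinEquiv_apply_left, finSumFinEquiv_apply_left]
      simp only [Fin.le_def, Fin.coe_castAdd]
      try omega
    · show (False ∨ True) ↔ _
      rw [finSumFinEquiv_apply_left, finSumFinEquiv_apply_right]
      have ha := a.isLt
      simp only [false_or, true_iff, Fin.le_def, Fin.coe_castAdd, Fin.coe_natAdd]
      omega
    · show (False ∨ False) ↔ _
      rw [finSumFinEquiv_apply_right, finSumFinEquiv_apply_left]
      have hb := b.isLt
      simp only [or_self, false_iff, Fin.le_def, Fin.coe_natAdd, Fin.coe_castAdd]
      omega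
    · show (Q.1.hle a b ∨ Q.1.rle a b) ↔ _
      rw [Q.2 a b, finSumFinEquiv_apply_right, finSumFinEquiv_apply_right]
      simp only [Fin.le_def, Fin.coe_natAdd]
      omega⟩

/-- The product `P ▷ Q` of plane posets, realized canonically. -/
def hcomp {k l : ℕ} (P : CanonPP k) (Q : CanonPP l) : CanonPP (k + l) :=
  ⟨(P.1.hcomp Q.1).map finSumFinEquiv, by
    intro x y
    obtain ⟨a, rfl⟩ := finSumFinEquiv.surjective x
    obtain ⟨b, rfl⟩ := finSumFinEquiv.surjective y
    simp only [PlanePoset.map_hle, PlanePoset.map_rle, Equiv.symm_apply_apply]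
    rcases a with a | a <;> rcases b with b | b
    · show (P.1.hle a b ∨ P.1.rle a b) ↔ _
      rw [P.2 a b, finSumFinEquiv_apply_left, finSumFinEquiv_apply_left]
      simp only [Fin.le_def, Fin.coe_castAdd]
      try omega
    · show (True ∨ False) ↔ _
      rw [finSumFinEquiv_apply_left, finSumFinEquiv_apply_right]
      have ha := a.isLt
      simp only [or_false, true_iff, Fin.le_def, Fin.coe_castAdd, Fin.coe_natAdd]
      omega
    · show (False ∨ False) ↔ _
      rw [finSumFinEquiv_apply_right, finSumFinEquiv_apply_left]
      have hb := b.isLt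
      simp only [or_self, false_iff, Fin.le_def, Fin.coe_natAdd, Fin.coe_castAdd]
      omega
    · show (Q.1.hle a b ∨ Q.1.rle a b) ↔ _
      rw [Q.2 a b, finSumFinEquiv_apply_right, finSumFinEquiv_apply_right]
      simp only [Fin.le_def, Fin.coe_natAdd]
      omega⟩

/-- Restriction of a plane poset to a plane subposet, realized canonically via the unique
increasing bijection. -/
def restrict {n : ℕ} (P : CanonPP n) (s : Finset (Fin n)) : CanonPP s.card :=
  ⟨(P.1.res s).map (s.orderIsoOfFin rfl).toEquiv.symm, by
    intro i j
    simp only [PlanePoset.map_hle, PlanePoset.map_rle, Equiv.symm_symm]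
    show (P.1.hle ((s.orderIsoOfFin rfl).toEquiv i).1 ((s.orderIsoOfFin rfl).toEquiv j).1 ∨
          P.1.rle ((s.orderIsoOfFin rfl).toEquiv i).1 ((s.orderIsoOfFin rfl).toEquiv j).1) ↔ i ≤ j
    rw [P.2]
    rw [Subtype.coe_le_coe]
    exact (s.orderIsoOfFin rfl).le_iff_le⟩

/-- The involution `ι`, on canonical plane posets. -/
def iota {n : ℕ} (P : CanonPP n) : CanonPP n :=
  ⟨P.1.swap, fun x y => by rw [or_comm]; exact P.2 x y⟩

end CanonPP

/-- The partial (weak Bruhat) order on `PP(n)`: `P ≤ Q` iff `x ≤_h y` in `Q` implies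
`x ≤_h y` in `P` (the increasing bijection between canonical representatives being
the identity). -/
def PPle {n : ℕ} (P Q : CanonPP n) : Prop :=
  ∀ x y : Fin n, Q.1.hle x y → P.1.hle x y

/-- Strict version of the order on `PP(n)`. -/
def PPlt {n : ℕ} (P Q : CanonPP n) : Prop := PPle P Q ∧ P ≠ Q

/-- Covering relation of the poset `(PP(n), ≤)`. -/
def PPcovBy {n : ℕ} (P Q : CanonPP n) : Prop :=
  PPlt P Q ∧ ∀ T : CanonPP n, PPlt P T → ¬ PPlt T Q

/-- `E(P) = {(i,j) | i <_h j}`. -/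
def Eset {n : ℕ} (P : CanonPP n) : Set (Fin n × Fin n) :=
  {p | P.1.hle p.1 p.2 ∧ p.1 ≠ p.2}

/-- A biideal of a plane poset: an ideal for both partial orders, equivalently an ideal
for the induced total order. -/
def IsBiideal {n : ℕ} (P : CanonPP n) (I : Finset (Fin n)) : Prop :=
  ∀ x y : Fin n, x ∈ I → (P.1.hle x y ∨ P.1.rle x y) → y ∈ I

/-- `h_s^t = #{(x,y) ∈ s × t | x <_h y}`. -/
def hNum {n : ℕ} (P : CanonPP n) (s t : Finset (Fin n)) : ℕ :=
  ((s ×ˢ t).filter (fun p : Fin n × Fin n => P.1.hle p.1 p.2 ∧ p.1 ≠ p.2)).card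

/-- `φ(P,Q) = #{(x,y) | x <_r y in P and x <_h y in Q} + #{(x,y) | x <_h y in P and
x <_r y in Q}` (via the identity increasing bijection). -/
def phi {n : ℕ} (P Q : CanonPP n) : ℕ :=
  (Finset.univ.filter (fun p : Fin n × Fin n =>
      (P.1.rle p.1 p.2 ∧ p.1 ≠ p.2) ∧ (Q.1.hle p.1 p.2 ∧ p.1 ≠ p.2))).card +
  (Finset.univ.filter (fun p : Fin n × Fin n =>
      (P.1.hle p.1 p.2 ∧ p.1 ≠ p.2) ∧ (Q.1.rle p.1 p.2 ∧ p.1 ≠ p.2))).card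

/-- The level `ℓ(P) = #{(x,y) | x <_r y}`. -/
def level {n : ℕ} (P : CanonPP n) : ℕ :=
  (Finset.univ.filter (fun p : Fin n × Fin n => P.1.rle p.1 p.2 ∧ p.1 ≠ p.2)).card

/-- The plane poset `P_σ = Ψ_n(σ)` associated to a permutation `σ`. -/
def PsiPerm {n : ℕ} (σ : Equiv.Perm (Fin n)) : CanonPP n :=
  ⟨{ hle := fun i j => i ≤ j ∧ σ.symm i ≤ σ.symm j
     rle := fun i j => i ≤ j ∧ σ.symm j ≤ σ.symm i
     hle_refl := fun x => ⟨le_refl x, le_refl _⟩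
     hle_antisymm := fun x y h1 h2 => le_antisymm h1.1 h2.1
     hle_trans := fun x y z h1 h2 => ⟨le_trans h1.1 h2.1, le_trans h1.2 h2.2⟩
     rle_refl := fun x => ⟨le_refl x, le_refl _⟩
     rle_antisymm := fun x y h1 h2 => le_antisymm h1.1 h2.1
     rle_trans := fun x y z h1 h2 => ⟨le_trans h1.1 h2.1, le_trans h2.2 h1.2⟩
     compat := by
       intro x y hxy
       have h1 : (x : ℕ) ≠ (y : ℕ) := fun h => hxy (Fin.ext h)
       have h2 : ((σ.symm x : Fin n) : ℕ) ≠ ((σ.symm y : Fin n) : ℕ) :=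
         fun h => hxy (σ.symm.injective (Fin.ext h))
       simp only [Fin.le_def]
       omega },
   by
     intro x y
     show ((x ≤ y ∧ σ.symm x ≤ σ.symm y) ∨ (x ≤ y ∧ σ.symm y ≤ σ.symm x)) ↔ x ≤ y
     simp only [Fin.le_def]
     omega⟩

/-- One step of the weak Bruhat order: exchange two consecutive letters `i < j`
(`i` appearing immediately before `j`) in the word `σ(1) ⋯ σ(n)`. -/
def bruhatStep {n : ℕ} (σ τ : Equiv.Perm (Fin n)) : Prop :=
  ∃ (i j k : Fin n) (hk : (k : ℕ) + 1 < n),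
    i < j ∧ σ k = i ∧ σ ⟨(k : ℕ) + 1, hk⟩ = j ∧ τ = Equiv.swap i j * σ

/-- The set of (isoclasses of) plane posets. -/
abbrev PPS : Type := Σ n : ℕ, CanonPP n

/-- Composition product on plane posets. -/
def PPS.comp (P Q : PPS) : PPS := ⟨P.1 + Q.1, P.2.comp Q.2⟩

/-- The product `▷` on plane posets. -/
def PPS.hcomp (P Q : PPS) : PPS := ⟨P.1 + Q.1, P.2.hcomp Q.2⟩

/-- Value of the coproduct `Δ_q` on a plane poset:
`Δ_q(P) = Σ_{I biideal of P} q^{h_{P∖I}^I} (P∖I) ⊗ I`. -/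
def deltaOn (K : Type) [Field K] (q : K) {n : ℕ} (P : CanonPP n) :
    (PPS →₀ K) ⊗[K] (PPS →₀ K) :=
  ∑ I ∈ Finset.univ.filter (fun I : Finset (Fin n) => IsBiideal P I),
    q ^ hNum P Iᶜ I •
      (Finsupp.single (⟨Iᶜ.card, P.restrict Iᶜ⟩ : PPS) (1 : K) ⊗ₜ[K]
        Finsupp.single (⟨I.card, P.restrict I⟩ : PPS) (1 : K))

/-- The coproduct `Δ_q` on `h_PP`, extended linearly. -/
def Delta (K : Type) [Field K] (q : K) :
    (PPS →₀ K) →ₗ[K] (PPS →₀ K) ⊗[K] (PPS →₀ K) :=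
  Finsupp.lift _ K PPS fun P => deltaOn K q P.2

/-- The composition product `m`, extended bilinearly to `h_PP`. -/
def mulPP (K : Type) [Field K] : (PPS →₀ K) →ₗ[K] (PPS →₀ K) →ₗ[K] (PPS →₀ K) :=
  Finsupp.lift _ K PPS fun P =>
    Finsupp.lift _ K PPS fun Q => Finsupp.single (PPS.comp P Q) 1

/-- The componentwise product on `h_PP ⊗ h_PP`. -/
def mulT (K : Type) [Field K] :
    ((PPS →₀ K) ⊗[K] (PPS →₀ K)) →ₗ[K] ((PPS →₀ K) ⊗[K] (PPS →₀ K)) →ₗ[K]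
      ((PPS →₀ K) ⊗[K] (PPS →₀ K)) :=
  TensorProduct.map₂ (mulPP K) (mulPP K)

/-- Multiplication of the basis element of a plane poset by `q^{n·c}` where `n` is its
cardinality. -/
def scale (K : Type) [Field K] (q : K) (c : ℕ) : (PPS →₀ K) →ₗ[K] (PPS →₀ K) :=
  Finsupp.lift _ K PPS fun P => q ^ (P.1 * c) • Finsupp.single P 1

/-- Right multiplication by a plane poset for the product `▷`. -/
def rmulH (K : Type) [Field K] (Q : PPS) : (PPS →₀ K) →ₗ[K] (PPS →₀ K) :=
  Finsupp.lift _ K PPS fun P => Finsupp.single (PPS.hcomp P Q) 1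

/-- Left multiplication by a plane poset for the product `▷`. -/
def lmulH (K : Type) [Field K] (P : PPS) : (PPS →₀ K) →ₗ[K] (PPS →₀ K) :=
  Finsupp.lift _ K PPS fun Q => Finsupp.single (PPS.hcomp P Q) 1

/-- The pairing on plane posets of the same cardinality:
`⟨P,Q⟩_q = q^{φ(P,Q)}` if `ι(P) ≤ Q`, and `0` otherwise. -/
def pairN (K : Type) [Field K] (q : K) {n : ℕ} (P Q : CanonPP n) : K :=
  if PPle (CanonPP.iota P) Q then q ^ phi P Q else 0

/-- The pairing `⟨-,-⟩_q` on plane posets (zero on posets of different cardinalities). -/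
def pairPP (K : Type) [Field K] (q : K) (P Q : PPS) : K :=
  if h : P.1 = Q.1 then pairN K q (cast (congrArg CanonPP h) P.2) Q.2 else 0

/-- The pairing `⟨-,-⟩_q`, extended bilinearly to `h_PP`. -/
def Bform (K : Type) [Field K] (q : K) : (PPS →₀ K) →ₗ[K] (PPS →₀ K) →ₗ[K] K :=
  Finsupp.lift _ K PPS fun P => Finsupp.lift K K PPS fun Q => pairPP K q P Q

end

def Eset' {n : ℕ} (σ : Equiv.Perm (Fin n)) : Set (Fin n × Fin n) :=
  {p | (p.1 ≤ p.2 ∧ σ.symm p.1 ≤ σ.symm p.2) ∧ p.1 ≠ p.2}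

theorem statement9' {n : ℕ} (σ τ : Equiv.Perm (Fin n)) (i j : Fin n)
    (hij : (i, j) ∈ Eset' σ)
    (hE : Eset' τ = Eset' σ \ {(i, j)}) :
    (∃ (k : Fin n) (hk : (k : ℕ) + 1 < n), σ k = i ∧ σ ⟨(k : ℕ) + 1, hk⟩ = j) ∧
      τ = Equiv.swap i j * σ := by
  obtain ⟨⟨hle1, hle2⟩, hne⟩ := hij
  have hilt : i < j := lt_of_le_of_ne hle1 hne
  have hab : σ.symm i < σ.symm j :=
    lt_of_le_of_ne hle2 (fun h => hne (σ.symm.injective h))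
  have hEmem : ∀ x y : Fin n,
      ((x ≤ y ∧ τ.symm x ≤ τ.symm y) ∧ x ≠ y) ↔
        (((x ≤ y ∧ σ.symm x ≤ σ.symm y) ∧ x ≠ y) ∧ ¬ (x = i ∧ y = j)) := by
    intro x y
    have h := Set.ext_iff.mp hE (x, y)
    simpa [Eset', Set.mem_diff, Prod.ext_iff] using h
  have key : ∀ x y : Fin n, x < y → ¬ (x = i ∧ y = j) →
      (τ.symm x < τ.symm y ↔ σ.symm x < σ.symm y) := by
    intro x y hxy hne2
    have hne' : x ≠ y := ne_of_lt hxy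
    have h := hEmem x y
    have hτne : τ.symm x ≠ τ.symm y := fun h' => hne' (τ.symm.injective h')
    have hσne : σ.symm x ≠ σ.symm y := fun h' => hne' (σ.symm.injective h')
    constructor
    · intro hl
      exact lt_of_le_of_ne (h.mp ⟨⟨le_of_lt hxy, le_of_lt hl⟩, hne'⟩).1.1.2 hσne
    · intro hl
      exact lt_of_le_of_ne
        ((h.mpr ⟨⟨⟨le_of_lt hxy, le_of_lt hl⟩, hne'⟩, hne2⟩)).1.2 hτne
  have hτji : τ.symm j < τ.symm i := by
    have h := hEmem i j
    have hnle : ¬ (τ.symm i ≤ τ.symm j) := fun hle =>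
      (h.mp ⟨⟨le_of_lt hilt, hle⟩, hne⟩).2 ⟨rfl, rfl⟩
    exact lt_of_not_ge hnle
  -- adjacency
  have hadj : ((σ.symm j : Fin n) : ℕ) = ((σ.symm i : Fin n) : ℕ) + 1 := by
    by_contra hcon
    have hab' : ((σ.symm i : Fin n) : ℕ) < (σ.symm j : Fin n) := hab
    have h1 : ((σ.symm i : Fin n) : ℕ) + 1 < ((σ.symm j : Fin n) : ℕ) := by omega
    have hm : ((σ.symm i : Fin n) : ℕ) + 1 < n := lt_trans h1 (σ.symm j).isLt
    set m : Fin n := ⟨((σ.symm i : Fin n) : ℕ) + 1, hm⟩ with hmdef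
    set z := σ m with hzdef
    have hz : σ.symm z = m := σ.symm_apply_apply m
    have hzi : z ≠ i := by
      intro h
      have : σ.symm z = σ.symm i := by rw [h]
      rw [hz] at this
      have := congrArg Fin.val this
      simp [hmdef] at this
    have hzj : z ≠ j := by
      intro h
      have : σ.symm z = σ.symm j := by rw [h]
      rw [hz] at this
      have := congrArg Fin.val this
      simp [hmdef] at this
      omega
    have hmlt : σ.symm z < σ.symm j := by
      rw [hz]; show (m : ℕ) < _; simp [hmdef]; omega
    have hmgt : ¬ (σ.symm z < σ.symm i) := by
      rw [hz]; show ¬ ((m : ℕ) < _); simp [hmdef]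
    have hilz : σ.symm i < σ.symm z := by
      rw [hz]; show _ < (m : ℕ); simp [hmdef]
    have hjgz : ¬ (σ.symm j < σ.symm z) := by
      rw [hz]; show ¬ (_ < (m : ℕ)); simp [hmdef]; omega
    rcases lt_trichotomy z i with hc | hc | hc
    · have k1 : ¬ (τ.symm z < τ.symm i) := fun h' =>
        hmgt ((key z i hc (fun hh => hzi hh.1)).mp h')
      have k2 : τ.symm z < τ.symm j :=
        (key z j (hc.trans hilt) (fun hh => hzi hh.1)).mpr hmlt
      have k3 : τ.symm i < τ.symm z := by
        rcases lt_trichotomy (τ.symm i) (τ.symm z) with h | h | h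
        · exact h
        · exact absurd (τ.symm.injective h.symm) hzi
        · exact absurd h k1
      exact absurd (lt_trans (lt_trans hτji k3) k2) (lt_irrefl _)
    · exact hzi hc
    · have k1 : τ.symm i < τ.symm z :=
        (key i z hc (fun hh => hzj hh.2)).mpr hilz
      rcases lt_trichotomy z j with hd | hd | hd
      · have k2 : τ.symm z < τ.symm j :=
          (key z j hd (fun hh => hzi hh.1)).mpr hmlt
        exact absurd (lt_trans (lt_trans hτji k1) k2) (lt_irrefl _)
      · exact hzj hd
      · have k2 : ¬ (τ.symm j < τ.symm z) := fun h' =>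
          hjgz ((key j z hd (fun hh => hzj hh.2)).mp h')
        have k3 : τ.symm z < τ.symm j := by
          rcases lt_trichotomy (τ.symm z) (τ.symm j) with h | h | h
          · exact h
          · exact absurd (τ.symm.injective h) hzj
          · exact absurd h k2
        exact absurd (lt_trans (lt_trans hτji k1) k3) (lt_irrefl _)
  -- first conclusion
  have hk : ((σ.symm i : Fin n) : ℕ) + 1 < n := by
    have := (σ.symm j).isLt; omega
  have hfin : (⟨((σ.symm i : Fin n) : ℕ) + 1, hk⟩ : Fin n) = σ.symm j :=
    Fin.ext (by simp [hadj])
  refine ⟨⟨σ.symm i, hk, σ.apply_symm_apply i, by rw [hfin]; exact σ.apply_symm_apply j⟩, ?_⟩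
  -- second conclusion
  set ρ : Equiv.Perm (Fin n) := (Equiv.swap i j).trans σ.symm with hρdef
  have hρi : ρ i = σ.symm j := by simp [hρdef]
  have hρj : ρ j = σ.symm i := by simp [hρdef]
  have hρo : ∀ x : Fin n, x ≠ i → x ≠ j → ρ x = σ.symm x := by
    intro x h1 h2; simp [hρdef, Equiv.swap_apply_of_ne_of_ne h1 h2]
  have hσa : ∀ x : Fin n, x ≠ i → (σ.symm x : Fin n) ≠ σ.symm i :=
    fun x h1 h => h1 (σ.symm.injective h)
  have hσb : ∀ x : Fin n, x ≠ j → (σ.symm x : Fin n) ≠ σ.symm j :=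
    fun x h1 h => h1 (σ.symm.injective h)
  have main : ∀ u v : Fin n, u < v → (τ.symm u < τ.symm v ↔ ρ u < ρ v) := by
    intro u v huv
    by_cases hui : u = i
    · subst hui
      by_cases hvj : v = j
      · subst hvj
        rw [hρi, hρj]
        constructor
        · intro h; exact absurd (lt_trans h hτji) (lt_irrefl _)
        · intro h; exact absurd (lt_trans h hab) (lt_irrefl _)
      · have hvi : v ≠ u := (ne_of_lt huv).symm
        rw [hρi, hρo v hvi hvj, key u v huv (fun hh => hvj hh.2)]
        have h1 := hσa v hvi
        have h2 := hσb v hvj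
        have e1 : ((σ.symm v : Fin n) : ℕ) ≠ (σ.symm u : Fin n) :=
          fun h => h1 (Fin.ext h)
        have e2 : ((σ.symm v : Fin n) : ℕ) ≠ (σ.symm j : Fin n) :=
          fun h => h2 (Fin.ext h)
        show ((σ.symm u : Fin n) : ℕ) < (σ.symm v : Fin n) ↔
          ((σ.symm j : Fin n) : ℕ) < (σ.symm v : Fin n)
        omega
    · by_cases huj : u = j
      · subst huj
        have hvi : v ≠ i := fun h => (asymm hilt) (h ▸ huv)
        have hvj : v ≠ u := (ne_of_lt huv).symm
        rw [hρj, hρo v hvi hvj, key u v huv (fun hh => hui hh.1)]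
        have e1 : ((σ.symm v : Fin n) : ℕ) ≠ (σ.symm i : Fin n) :=
          fun h => (hσa v hvi) (Fin.ext h)
        have e2 : ((σ.symm v : Fin n) : ℕ) ≠ (σ.symm u : Fin n) :=
          fun h => (hσb v hvj) (Fin.ext h)
        show ((σ.symm u : Fin n) : ℕ) < (σ.symm v : Fin n) ↔
          ((σ.symm i : Fin n) : ℕ) < (σ.symm v : Fin n)
        omega
      · by_cases hvi : v = i
        · subst hvi
          have huj' : u ≠ j := fun h => (asymm hilt) (h ▸ huv)
          rw [hρi, hρo u hui huj, key u v huv (fun hh => hui hh.1)]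
          have e1 : ((σ.symm u : Fin n) : ℕ) ≠ (σ.symm v : Fin n) :=
            fun h => (hσa u hui) (Fin.ext h)
          have e2 : ((σ.symm u : Fin n) : ℕ) ≠ (σ.symm j : Fin n) :=
            fun h => (hσb u huj) (Fin.ext h)
          show ((σ.symm u : Fin n) : ℕ) < (σ.symm v : Fin n) ↔
            ((σ.symm u : Fin n) : ℕ) < (σ.symm j : Fin n)
          omega
        · by_cases hvj : v = j
          · subst hvj
            rw [hρj, hρo u hui huj, key u v huv (fun hh => hui hh.1)]
            have e1 : ((σ.symm u : Fin n) : ℕ) ≠ (σ.symm i : Fin n) :=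
              fun h => (hσa u hui) (Fin.ext h)
            have e2 : ((σ.symm u : Fin n) : ℕ) ≠ (σ.symm v : Fin n) :=
              fun h => (hσb u huj) (Fin.ext h)
            show ((σ.symm u : Fin n) : ℕ) < (σ.symm v : Fin n) ↔
              ((σ.symm u : Fin n) : ℕ) < (σ.symm i : Fin n)
            omega
          · rw [hρo u hui huj, hρo v hvi hvj]
            exact key u v huv (fun hh => hui hh.1)
  have full : ∀ u v : Fin n, u ≠ v → (τ.symm u < τ.symm v ↔ ρ u < ρ v) := by
    intro u v huv
    rcases lt_trichotomy u v with h | h | h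
    · exact main u v h
    · exact absurd h huv
    · have h1 := main v u h
      have e1 : τ.symm u ≠ τ.symm v := fun h' => huv (τ.symm.injective h')
      have e2 : ρ u ≠ ρ v := fun h' => huv (ρ.injective h')
      constructor
      · intro h2
        rcases lt_trichotomy (ρ u) (ρ v) with h3 | h3 | h3
        · exact h3
        · exact absurd h3 e2
        · exact absurd (lt_trans (h1.mpr h3) h2) (lt_irrefl _)
      · intro h2
        rcases lt_trichotomy (τ.symm u) (τ.symm v) with h3 | h3 | h3
        · exact h3
        · exact absurd h3 e1
        · exact absurd (lt_trans (h1.mp h3) h2) (lt_irrefl _)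
  have hsm : StrictMono (fun p : Fin n => ρ (τ p)) := by
    intro p q hpq
    have := (full (τ p) (τ q) (fun h => (ne_of_lt hpq) (τ.injective h))).mp
    simp only [Equiv.symm_apply_apply] at this
    exact this hpq
  have hgid : ∀ p : Fin n, ρ (τ p) = p := by
    have hsurj : Function.Surjective (fun p : Fin n => ρ (τ p)) :=
      ρ.surjective.comp τ.surjective
    intro p
    have he : (StrictMono.orderIsoOfSurjective _ hsm hsurj) p
        = (OrderIso.refl (Fin n)) p := by
      rw [Subsingleton.elim (StrictMono.orderIsoOfSurjective _ hsm hsurj)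
        (OrderIso.refl (Fin n))]
    rw [OrderIso.refl_apply] at he
    exact (congrFun (StrictMono.coe_orderIsoOfSurjective _ hsm hsurj) p).symm.trans he
  have htau : ∀ x : Fin n, τ x = Equiv.swap i j (σ x) := by
    intro x
    have h := hgid x
    simp only [hρdef, Equiv.trans_apply] at h
    have h2 := congrArg σ h
    rw [Equiv.apply_symm_apply] at h2
    have h3 := congrArg (Equiv.swap i j) h2
    rw [Equiv.swap_apply_self] at h3
    exact h3
  exact Equiv.ext fun x => by rw [Equiv.Perm.mul_apply]; exact htau x

/-- Let `P, Q ∈ PP(n)` with `P ⪯ Q`, say `E(Q) = E(P) ∖ {(i,j)}` with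
`(i,j) ∈ E(P)`. Then `i, j` are two consecutive letters (in this order) of the word
representing `σ = Ψ_n⁻¹(P)`, and `Ψ_n⁻¹(Q)` is obtained from `σ` by permuting them. -/
theorem statement9 {n : ℕ} (σ τ : Equiv.Perm (Fin n)) (i j : Fin n)
    (hij : (i, j) ∈ Eset (PsiPerm σ))
    (hE : Eset (PsiPerm τ) = Eset (PsiPerm σ) \ {(i, j)}) :
    (∃ (k : Fin n) (hk : (k : ℕ) + 1 < n), σ k = i ∧ σ ⟨(k : ℕ) + 1, hk⟩ = j) ∧
      τ = Equiv.swap i j * σ :=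
  statement9' σ τ i j hij hE
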